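/- If C ⊂ H^d is a complete body of diameter δ, then for every boundary point p of C there exists a point p' in C with hyperbolic distance d(p, p') = δ. -/

import Mathlib

/- We formalize hyperbolic space `H^d` via the Beltrami–Klein model: the open
unit ball of `ℝ^d`, where hyperbolic geodesic segments are exactly Euclidean
segments (so hyperbolic convexity = Euclidean convexity), hyperplanes are
chords of affine hyperplanes, and the hyperbolic distance is given by the
Cayley–Klein formula `cosh d(x,y) = (1 - ⟪x,y⟫)/√((1-‖x‖²)(1-‖y‖²))`. -/

noncomputable section
open Metric Set RealInnerProductSpace

namespace Hyp

abbrev E (d : ℕ) := EuclideanSpace ℝ (Fin d)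

/-- The Klein model of `H^d`: the open unit ball. -/
def ball01 (d : ℕ) : Set (E d) := Metric.ball 0 1

/-- Inverse hyperbolic cosine. -/
def acosh (z : ℝ) : ℝ := Real.log (z + Real.sqrt (z ^ 2 - 1))

/-- Hyperbolic distance in the Beltrami–Klein model. -/
def hDist {d : ℕ} (x y : E d) : ℝ :=
  acosh ((1 - (inner ℝ x y : ℝ)) / (Real.sqrt (1 - ‖x‖ ^ 2) * Real.sqrt (1 - ‖y‖ ^ 2)))

/-- Hyperbolic diameter of a set. -/
def hDiam {d : ℕ} (C : Set (E d)) : ℝ :=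
  sSup {r | ∃ a ∈ C, ∃ b ∈ C, hDist a b = r}

/-- Hyperbolic (infimal) distance between two sets. -/
def hSetDist {d : ℕ} (A B : Set (E d)) : ℝ :=
  sInf {r | ∃ a ∈ A, ∃ b ∈ B, hDist a b = r}

/-- Hyperbolic distance from a point to a set. -/
def hPointDist {d : ℕ} (x : E d) (A : Set (E d)) : ℝ :=
  sInf {r | ∃ a ∈ A, hDist x a = r}

/-- Closed hyperbolic ball of radius `r` about `x`. -/
def hBall {d : ℕ} (x : E d) (r : ℝ) : Set (E d) :=
  {y ∈ ball01 d | hDist x y ≤ r}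

/-- A convex body in `H^d`: compact, convex (hyperbolically, i.e. in the Klein
model also Euclidean-convex), with nonempty interior, inside the model. -/
def IsBody {d : ℕ} (C : Set (E d)) : Prop :=
  IsCompact C ∧ Convex ℝ C ∧ (interior C).Nonempty ∧ C ⊆ ball01 d

/-- A hyperplane of `H^d` in the Klein model: a chord `{x ∈ B | ⟪u,x⟫ = c}` of
the unit ball, with `‖u‖ = 1` and `|c| < 1` (so the chord is nonempty). -/
structure HPlane (d : ℕ) where
  u : E d
  c : ℝ
  norm_u : ‖u‖ = 1
  abs_c : |c| < 1

/-- The underlying set of points of a hyperplane. -/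
def HPlane.carrier {d : ℕ} (H : HPlane d) : Set (E d) :=
  {x ∈ ball01 d | (inner ℝ H.u x : ℝ) = H.c}

/-- `H` supports `C`: they meet and `C` lies in the closed half-space
`⟪u,·⟫ ≤ c` (an orientation of the normal is chosen accordingly). -/
def Supports {d : ℕ} (H : HPlane d) (C : Set (E d)) : Prop :=
  (H.carrier ∩ C).Nonempty ∧ ∀ x ∈ C, (inner ℝ H.u x : ℝ) ≤ H.c

/-- Two hyperplanes are ultraparallel iff their closures (in `ℝ^d`, hence
including ideal boundary points) are disjoint. -/
def Ultraparallel {d : ℕ} (H K : HPlane d) : Prop :=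
  closure H.carrier ∩ closure K.carrier = ∅

/-- The width of `C` determined by a supporting hyperplane `H`: the distance
from `H` to a farthest ultraparallel supporting hyperplane of `C`. -/
def hwidth {d : ℕ} (C : Set (E d)) (H : HPlane d) : ℝ :=
  sSup {r | ∃ K : HPlane d, Ultraparallel H K ∧ Supports K C ∧
    r = hSetDist H.carrier K.carrier}

/-- Thickness: the minimum width over all supporting hyperplanes. -/
def thickness {d : ℕ} (C : Set (E d)) : ℝ :=
  sInf {r | ∃ H : HPlane d, Supports H C ∧ r = hwidth C H}

/-- A reduced body. -/
def IsReduced {d : ℕ} (R : Set (E d)) : Prop :=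
  IsBody R ∧ ∀ Z : Set (E d), IsBody Z → Z ⊆ R → Z ≠ R → thickness Z < thickness R

/-- The equidistant hypersurface to `H` at distance `t`, on the side
`⟪u,·⟫ < c` (the side on which supported bodies lie). -/
def equiSurf {d : ℕ} (H : HPlane d) (t : ℝ) : Set (E d) :=
  {x ∈ ball01 d | (inner ℝ H.u x : ℝ) < H.c ∧ hPointDist x H.carrier = t}

/-- The distance from `H` to the nearest equidistant hypersurface `E` to `H`
with `C ⊆ conv(H ∪ E)` (the thickness of the equidistant strip `conv(H ∪ E)`). -/
def equiLevel {d : ℕ} (C : Set (E d)) (H : HPlane d) : ℝ :=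
  sInf {t | 0 < t ∧ C ⊆ convexHull ℝ (H.carrier ∪ equiSurf H t)}

/-- `E_H(C)`: the nearest equidistant hypersurface to `H` such that `C` is
contained in the equidistant strip `conv(H ∪ E_H(C))`. -/
def EH {d : ℕ} (C : Set (E d)) (H : HPlane d) : Set (E d) :=
  equiSurf H (equiLevel C H)

/-- A body of constant width `δ`. -/
def ConstWidth {d : ℕ} (C : Set (E d)) (δ : ℝ) : Prop :=
  ∀ H : HPlane d, Supports H C → hwidth C H = δ

/-- A complete set of diameter `δ`: adding any point of `H^d` outside `C`
strictly increases the diameter. -/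
def IsComplete {d : ℕ} (C : Set (E d)) (δ : ℝ) : Prop :=
  hDiam C = δ ∧ ∀ x ∈ ball01 d, x ∉ C → hDiam (insert x C) > δ

/-- The circular arc `P_c(a,b)`: points `g` at hyperbolic distance `δ` from `c`
whose (hyperbolic = Euclidean, in the Klein model) segment to `c` meets the
segment `ab`. -/
def arcP {d : ℕ} (c a b : E d) (δ : ℝ) : Set (E d) :=
  {g ∈ ball01 d | hDist c g = δ ∧ (segment ℝ c g ∩ segment ℝ a b).Nonempty}

/-! Approximate the boundary point `p` by points `y ∉ C`. By completeness each `y` lies at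
distance `> δ` from some point of `C`; by compactness of `C` and continuity of `hDist` these
points accumulate at some `p' ∈ C` with `hDist p p' ≥ δ`, and `≤ δ` holds since `hDiam C = δ`. -/

lemma acosh_one : acosh 1 = 0 := by
  simp [acosh]

lemma continuousAt_acosh {z : ℝ} (hz : 0 < z) : ContinuousAt acosh z := by
  have hsum : Continuous fun w : ℝ => w + Real.sqrt (w ^ 2 - 1) := by fun_prop
  exact (Real.continuousAt_log (by positivity)).comp hsum.continuousAt

lemma norm_lt_one_of_mem_ball01 {d : ℕ} {x : E d} (hx : x ∈ ball01 d) : ‖x‖ < 1 :=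
  mem_ball_zero_iff.1 hx

lemma inner_lt_one_of_mem_ball01 {d : ℕ} {x y : E d} (hx : x ∈ ball01 d) (hy : y ∈ ball01 d) :
    inner ℝ x y < 1 := by
  have hx' := norm_lt_one_of_mem_ball01 hx
  have hy' := norm_lt_one_of_mem_ball01 hy
  calc inner ℝ x y ≤ ‖x‖ * ‖y‖ := real_inner_le_norm x y
    _ < 1 := by nlinarith [norm_nonneg x, norm_nonneg y]

lemma hDist_comm {d : ℕ} (x y : E d) : hDist x y = hDist y x := by
  rw [hDist, hDist, real_inner_comm, mul_comm]

lemma hDist_self {d : ℕ} {x : E d} (hx : x ∈ ball01 d) : hDist x x = 0 := by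
  have hpos : 0 < 1 - ‖x‖ ^ 2 := by nlinarith [norm_nonneg x, norm_lt_one_of_mem_ball01 hx]
  rw [hDist, real_inner_self_eq_norm_sq, Real.mul_self_sqrt hpos.le, div_self hpos.ne', acosh_one]

lemma continuousOn_hDist {d : ℕ} :
    ContinuousOn (fun q : E d × E d => hDist q.1 q.2) (ball01 d ×ˢ ball01 d) := by
  rintro ⟨x, y⟩ ⟨hx, hy⟩
  have hsqrt_pos : ∀ z : E d, z ∈ ball01 d → 0 < Real.sqrt (1 - ‖z‖ ^ 2) := fun z hz =>
    Real.sqrt_pos.2 (by nlinarith [norm_nonneg z, norm_lt_one_of_mem_ball01 hz])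
  have hden := mul_pos (hsqrt_pos x hx) (hsqrt_pos y hy)
  have hnum : 0 < 1 - inner ℝ x y := sub_pos.2 (inner_lt_one_of_mem_ball01 hx hy)
  have harg : ContinuousAt (fun q : E d × E d =>
      (1 - inner ℝ q.1 q.2) / (Real.sqrt (1 - ‖q.1‖ ^ 2) * Real.sqrt (1 - ‖q.2‖ ^ 2))) (x, y) :=
    ContinuousAt.div (by fun_prop) (by fun_prop) hden.ne'
  exact ((continuousAt_acosh (div_pos hnum hden)).comp_of_eq harg rfl).continuousWithinAt

lemma bddAbove_hDist_of_isCompact {d : ℕ} {C : Set (E d)} (hC : IsCompact C)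
    (hsub : C ⊆ ball01 d) : BddAbove {r | ∃ a ∈ C, ∃ b ∈ C, hDist a b = r} := by
  have himage : {r | ∃ a ∈ C, ∃ b ∈ C, hDist a b = r} =
      (fun q : E d × E d => hDist q.1 q.2) '' (C ×ˢ C) := by
    ext r
    simp
  rw [himage]
  exact ((hC.prod hC).image_of_continuousOn
    (continuousOn_hDist.mono (prod_mono hsub hsub))).bddAbove

lemma hDist_le_hDiam {d : ℕ} {C : Set (E d)} (hC : IsCompact C) (hsub : C ⊆ ball01 d)
    {a b : E d} (ha : a ∈ C) (hb : b ∈ C) : hDist a b ≤ hDiam C :=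
  le_csSup (bddAbove_hDist_of_isCompact hC hsub) ⟨a, ha, b, hb, rfl⟩

lemma hDiam_le {d : ℕ} {s : Set (E d)} (hs : s.Nonempty) {δ : ℝ}
    (h : ∀ a ∈ s, ∀ b ∈ s, hDist a b ≤ δ) : hDiam s ≤ δ := by
  obtain ⟨a, ha⟩ := hs
  refine csSup_le ⟨_, a, ha, a, ha, rfl⟩ ?_
  rintro r ⟨a, ha, b, hb, rfl⟩
  exact h a ha b hb

lemma exists_lt_hDist_of_hDiam_lt_hDiam_insert {d : ℕ} {C : Set (E d)} (hC : IsCompact C)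
    (hsub : C ⊆ ball01 d) (hne : C.Nonempty) {x : E d} (hx : x ∈ ball01 d)
    (h : hDiam C < hDiam (insert x C)) : ∃ b ∈ C, hDiam C < hDist x b := by
  by_contra! hnear
  obtain ⟨c, hc⟩ := hne
  have hdiam_nonneg : 0 ≤ hDiam C := by
    simpa only [hDist_self (hsub hc)] using hDist_le_hDiam hC hsub hc hc
  refine h.not_ge (hDiam_le (insert_nonempty x C) ?_)
  rintro a (rfl | ha) b (rfl | hb)
  · exact (hDist_self hx).trans_le hdiam_nonneg
  · exact hnear b hb
  · rw [hDist_comm]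
    exact hnear a ha
  · exact hDist_le_hDiam hC hsub ha hb

lemma exists_le_hDist_of_mem_closure {d : ℕ} {C S : Set (E d)} (hC : IsCompact C)
    (hsub : C ⊆ ball01 d) {δ : ℝ} (hS : ∀ y ∈ S, ∃ b ∈ C, δ ≤ hDist y b) {p : E d}
    (hp : p ∈ ball01 d) (hpS : p ∈ closure S) : ∃ b ∈ C, δ ≤ hDist p b := by
  obtain ⟨y, hyS, hy⟩ := mem_closure_iff_seq_limit.1 hpS
  choose b hbC hb using fun n => hS (y n) (hyS n)
  obtain ⟨p', hp'C, φ, hφ, hbφ⟩ := hC.tendsto_subseq hbC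
  have hcont : ContinuousAt (fun q : E d × E d => hDist q.1 q.2) (p, p') :=
    continuousOn_hDist.continuousAt
      (prod_mem_nhds (isOpen_ball.mem_nhds hp) (isOpen_ball.mem_nhds (hsub hp'C)))
  have hlim : Filter.Tendsto (fun k => hDist (y (φ k)) (b (φ k))) Filter.atTop
      (nhds (hDist p p')) :=
    -- the ascription keeps unification from unfolding `hDist`, which times out
    (hcont.tendsto.comp ((hy.comp hφ.tendsto_atTop).prodMk_nhds hbφ) :)
  exact ⟨p', hp'C, ge_of_tendsto hlim (Filter.Eventually.of_forall fun k => hb (φ k))⟩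

/-- For every boundary point `p` of a complete body of diameter `δ` there is
`p' ∈ C` with `d(p,p') = δ`. -/
theorem exists_diametral_point {d : ℕ} (C : Set (E d)) (hC : IsBody C)
    (δ : ℝ) (hcomp : IsComplete C δ) (p : E d) (hp : p ∈ frontier C) :
    ∃ p' ∈ C, hDist p p' = δ := by
  obtain ⟨hcpt, -, -, hsub⟩ := hC
  obtain ⟨rfl, hgrow⟩ := hcomp
  have hpC : p ∈ C := hcpt.isClosed.frontier_subset hp
  have hfar : ∀ y ∈ ball01 d ∩ Cᶜ, ∃ b ∈ C, hDiam C ≤ hDist y b := fun y ⟨hy, hyC⟩ =>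
    (exists_lt_hDist_of_hDiam_lt_hDiam_insert hcpt hsub ⟨p, hpC⟩ hy (hgrow y hy hyC)).imp
      fun _ hb => ⟨hb.1, hb.2.le⟩
  have hp_approx : p ∈ closure (ball01 d ∩ Cᶜ) :=
    isOpen_ball.inter_closure ⟨hsub hpC, (frontier_eq_closure_inter_closure.subset hp).2⟩
  obtain ⟨p', hp'C, hge⟩ := exists_le_hDist_of_mem_closure hcpt hsub hfar (hsub hpC) hp_approx
  exact ⟨p', hp'C, (hDist_le_hDiam hcpt hsub hpC hp'C).antisymm hge⟩

end Hyp
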